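/- Let f be a real-valued C^∞ function on an open set Ω ⊆ ℝ² whose Hessian matrix is positive definite at every point, and set E := f_xx, F := f_xy, G := f_yy. Then at each point of Ω the Brioschi curvature expression K := ( det [[−½E_yy + F_xy − ½G_xx, ½E_x, F_x − ½E_y], [F_y − ½G_x, E, F], [½G_y, F, G]] − det [[0, ½E_y, ½G_x], [½E_y, E, F], [½G_x, F, G]] ) / (EG − F²)² vanishes if and only if det [[f_xx, f_xxx, f_xxy], [f_xy, f_xxy, f_xyy], [f_yy, f_xyy, f_yyy]] = 0, equivalently if and only if f_xx·{f_xy, f_yy} + f_xy·{f_yy, f_xx} + f_yy·{f_xx, f_xy} = 0. -/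

import Mathlib

/-- Partial derivative in the `x`-direction. -/
noncomputable def px (f : ℝ × ℝ → ℝ) (p : ℝ × ℝ) : ℝ := fderiv ℝ f p (1, 0)

/-- Partial derivative in the `y`-direction. -/
noncomputable def py (f : ℝ × ℝ → ℝ) (p : ℝ × ℝ) : ℝ := fderiv ℝ f p (0, 1)

/-- Standard Poisson bracket `{g,h} = g_x h_y - g_y h_x`, normalized by `{x,y}=1`. -/
noncomputable def pb (g h : ℝ × ℝ → ℝ) (p : ℝ × ℝ) : ℝ :=
  px g p * py h p - py g p * px h p

/-- The Brioschi expression for the Gaussian curvature of the metric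
`E dx² + 2F dx dy + G dy²`. -/
noncomputable def brioschi (E F G : ℝ × ℝ → ℝ) (p : ℝ × ℝ) : ℝ :=
  (Matrix.det
      !![-(1/2) * py (py E) p + py (px F) p - (1/2) * px (px G) p,
           (1/2) * px E p, px F p - (1/2) * py E p;
         py F p - (1/2) * px G p, E p, F p;
         (1/2) * py G p, F p, G p]
    - Matrix.det
      !![0, (1/2) * py E p, (1/2) * px G p;
         (1/2) * py E p, E p, F p;
         (1/2) * px G p, F p, G p])
    / (E p * G p - F p ^ 2) ^ 2

section helpers
variable {Ω : Set (ℝ × ℝ)} {g : ℝ × ℝ → ℝ} {p : ℝ × ℝ}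

lemma contDiffOn_pdir (hΩ : IsOpen Ω) (hg : ContDiffOn ℝ (⊤ : ℕ∞) g Ω) (v : ℝ × ℝ) :
    ContDiffOn ℝ (⊤ : ℕ∞) (fun q => fderiv ℝ g q v) Ω := by
  have h : ContDiffOn ℝ (⊤ : ℕ∞) (fderiv ℝ g) Ω := hg.fderiv_of_isOpen hΩ (by simp)
  exact (ContinuousLinearMap.apply ℝ ℝ v).contDiff.comp_contDiffOn h

lemma contDiffOn_px (hΩ : IsOpen Ω) (hg : ContDiffOn ℝ (⊤ : ℕ∞) g Ω) :
    ContDiffOn ℝ (⊤ : ℕ∞) (px g) Ω := contDiffOn_pdir hΩ hg (1,0)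

lemma contDiffOn_py (hΩ : IsOpen Ω) (hg : ContDiffOn ℝ (⊤ : ℕ∞) g Ω) :
    ContDiffOn ℝ (⊤ : ℕ∞) (py g) Ω := contDiffOn_pdir hΩ hg (0,1)

lemma pdir_pdir (hΩ : IsOpen Ω) (hg : ContDiffOn ℝ (⊤ : ℕ∞) g Ω) (hp : p ∈ Ω) (v w : ℝ × ℝ) :
    fderiv ℝ (fun q => fderiv ℝ g q v) p w = fderiv ℝ (fderiv ℝ g) p w v := by
  have hca : ContDiffAt ℝ (⊤ : ℕ∞) g p := hg.contDiffAt (hΩ.mem_nhds hp)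
  have hd : DifferentiableAt ℝ (fderiv ℝ g) p :=
    (hca.fderiv_right (m := (⊤ : ℕ∞)) (by simp)).differentiableAt (by simp)
  rw [fderiv_clm_apply hd (differentiableAt_const v)]
  simp

lemma swap (hΩ : IsOpen Ω) (hg : ContDiffOn ℝ (⊤ : ℕ∞) g Ω) (hp : p ∈ Ω) :
    px (py g) p = py (px g) p := by
  have hca : ContDiffAt ℝ (⊤ : ℕ∞) g p := hg.contDiffAt (hΩ.mem_nhds hp)
  have hsym := hca.isSymmSndFDerivAt (by rw [minSmoothness_of_isRCLikeNormedField]; exact WithTop.coe_le_coe.mpr (le_top : (2 : ℕ∞) ≤ ⊤))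
  have h1 := pdir_pdir hΩ hg hp (0,1) (1,0)
  have h2 := pdir_pdir hΩ hg hp (1,0) (0,1)
  show fderiv ℝ (fun q => fderiv ℝ g q (0,1)) p (1,0)
      = fderiv ℝ (fun q => fderiv ℝ g q (1,0)) p (0,1)
  rw [h1, h2, hsym]

lemma px_congr {h : ℝ × ℝ → ℝ} (he : g =ᶠ[nhds p] h) : px g p = px h p := by
  simp only [px, he.fderiv_eq]

lemma py_congr {h : ℝ × ℝ → ℝ} (he : g =ᶠ[nhds p] h) : py g p = py h p := by
  simp only [py, he.fderiv_eq]

lemma alg1 (E F G s a b c d : ℝ) (h : E * G - F ^ 2 ≠ 0) :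
    ((Matrix.det !![-(1/2) * s + s - (1/2) * s, (1/2) * a, b - (1/2) * b;
        c - (1/2) * c, E, F;
        (1/2) * d, F, G]
      - Matrix.det !![0, (1/2) * b, (1/2) * c; (1/2) * b, E, F; (1/2) * c, F, G])
      / (E * G - F ^ 2) ^ 2 = 0
    ↔ Matrix.det !![E, a, b; F, b, c; G, c, d] = 0) := by
  rw [div_eq_zero_iff, or_iff_left (pow_ne_zero _ h)]
  simp [Matrix.det_fin_three]
  constructor <;> intro h'
  · linear_combination (-4 : ℝ) * h'
  · linear_combination (-(1/4) : ℝ) * h'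

lemma alg2 (E F G a b c d : ℝ) :
    Matrix.det !![E, a, b; F, b, c; G, c, d] = 0
    ↔ E * (b * d - c * c) + F * (c * b - d * a) + G * (a * c - b * b) = 0 := by
  simp [Matrix.det_fin_three]
  constructor <;> intro h' <;> linear_combination h'

end helpers

theorem flat_iff_det_eq_zero_iff_poisson_eq_zero (Ω : Set (ℝ × ℝ)) (hΩ : IsOpen Ω)
    (f : ℝ × ℝ → ℝ) (hf : ContDiffOn ℝ (⊤ : ℕ∞) f Ω)
    (hpos : ∀ p ∈ Ω,
      Matrix.PosDef !![px (px f) p, py (px f) p; py (px f) p, py (py f) p]) :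
    ∀ p ∈ Ω,
      (brioschi (px (px f)) (py (px f)) (py (py f)) p = 0
        ↔ Matrix.det
            !![px (px f) p, px (px (px f)) p, py (px (px f)) p;
               py (px f) p, py (px (px f)) p, py (py (px f)) p;
               py (py f) p, py (py (px f)) p, py (py (py f)) p] = 0)
      ∧ (Matrix.det
            !![px (px f) p, px (px (px f)) p, py (px (px f)) p;
               py (px f) p, py (px (px f)) p, py (py (px f)) p;
               py (py f) p, py (py (px f)) p, py (py (py f)) p] = 0
          ↔ px (px f) p * pb (py (px f)) (py (py f)) p
            + py (px f) p * pb (py (py f)) (px (px f)) p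
            + py (py f) p * pb (px (px f)) (py (px f)) p = 0) := by
  intro p hp
  have hA : ContDiffOn ℝ (⊤ : ℕ∞) (px f) Ω := contDiffOn_px hΩ hf
  have hB : ContDiffOn ℝ (⊤ : ℕ∞) (py f) Ω := contDiffOn_py hΩ hf
  have hF : ContDiffOn ℝ (⊤ : ℕ∞) (py (px f)) Ω := contDiffOn_py hΩ hA
  have hmem := hΩ.mem_nhds hp
  have eF : px (py (px f)) =ᶠ[nhds p] py (px (px f)) :=
    Filter.eventually_of_mem hmem (fun q hq => swap hΩ hA hq)
  have eG : px (py (py f)) =ᶠ[nhds p] py (py (px f)) := by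
    refine Filter.eventually_of_mem hmem (fun q hq => ?_)
    have hq1 : px (py (py f)) q = py (px (py f)) q := swap hΩ hB hq
    have hq2 : py (px (py f)) q = py (py (px f)) q :=
      py_congr (Filter.eventually_of_mem (hΩ.mem_nhds hq) (fun r hr => swap hΩ hf hr))
    rw [hq1, hq2]
  have h1 : px (py (px f)) p = py (px (px f)) p := swap hΩ hA hp
  have h2 : px (py (py f)) p = py (py (px f)) p := eG.eq_of_nhds
  have h3 : py (px (py (px f))) p = py (py (px (px f))) p := py_congr eF
  have h4 : px (px (py (py f))) p = py (py (px (px f))) p := by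
    rw [px_congr eG, swap hΩ hF hp, h3]
  have hdet : px (px f) p * py (py f) p - py (px f) p ^ 2 > 0 := by
    have h := (hpos p hp).det_pos
    rw [Matrix.det_fin_two_of] at h
    nlinarith
  have hne : px (px f) p * py (py f) p - py (px f) p ^ 2 ≠ 0 := ne_of_gt hdet
  constructor
  · simp only [brioschi]
    rw [h1, h2, h3, h4]
    exact alg1 _ _ _ _ _ _ _ _ hne
  · simp only [pb]
    rw [h1, h2]
    exact alg2 _ _ _ _ _ _ _
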